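/- The correspondence X ↦ Min(X), sending a final segment of A* to its set of minimal elements, is a monoid morphism from the monoid of final segments of A* onto the monoid of antichains of A* (both under elementwise concatenation). -/
import Mathlib


/-- The Higman (subword) ordering on words over an ordered alphabet `A`. -/
def Hig {A : Type*} [PartialOrder A] (u v : List A) : Prop :=
  List.SublistForall₂ (· ≤ ·) u v

/-- Elementwise concatenation of languages. -/
def conc {A : Type*} (X Y : Set (List A)) : Set (List A) :=
  Set.image2 (· ++ ·) X Y

/-- A final segment (upward closed set) of `A*` for the Higman ordering. -/
def IsFinal {A : Type*} [PartialOrder A] (F : Set (List A)) : Prop :=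
  ∀ ⦃a b : List A⦄, Hig a b → a ∈ F → b ∈ F

/-- Upward closure of a set of words. -/
def upset {A : Type*} [PartialOrder A] (X : Set (List A)) : Set (List A) :=
  {b | ∃ a ∈ X, Hig a b}

/-- The set of minimal elements of a set of words. -/
def minSet {A : Type*} [PartialOrder A] (X : Set (List A)) : Set (List A) :=
  {x | x ∈ X ∧ ∀ y ∈ X, Hig y x → y = x}

/-- An antichain of words for the Higman ordering. -/
def IsAnti {A : Type*} [PartialOrder A] (U : Set (List A)) : Prop :=
  ∀ x ∈ U, ∀ y ∈ U, x ≠ y → ¬ Hig x y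

section HigLemmas
variable {A : Type*} [PartialOrder A]

theorem hig_refl (u : List A) : Hig u u := refl_of (List.SublistForall₂ (· ≤ ·)) u

theorem hig_trans {u v w : List A} (h1 : Hig u v) (h2 : Hig v w) : Hig u w :=
  trans_of (List.SublistForall₂ (· ≤ ·)) h1 h2

theorem hig_nil (u : List A) : Hig [] u := List.SublistForall₂.nil

theorem hig_nil_right {u : List A} (h : Hig u []) : u = [] := by cases h; rfl

theorem hig_length {u v : List A} (h : Hig u v) : u.length ≤ v.length := by
  obtain ⟨l, hf, hs⟩ := List.sublistForall₂_iff.1 h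
  exact hf.length_eq ▸ hs.length_le

theorem hig_antisymm {u v : List A} (h1 : Hig u v) (h2 : Hig v u) : u = v := by
  have hlen : u.length = v.length := le_antisymm (hig_length h1) (hig_length h2)
  obtain ⟨l, hf, hs⟩ := List.sublistForall₂_iff.1 h1
  have : l = v := hs.eq_of_length (by rw [← hf.length_eq, hlen])
  subst this
  obtain ⟨m, hg, ht⟩ := List.sublistForall₂_iff.1 h2
  have : m = u := ht.eq_of_length (by rw [← hg.length_eq, hlen])
  subst this
  exact List.ext_get hlen fun i h₁ h₂ => le_antisymm (hf.get _ _) (hg.get _ _)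

theorem hig_append {u u' v v' : List A} (h1 : Hig u u') (h2 : Hig v v') :
    Hig (u ++ v) (u' ++ v') := by
  obtain ⟨l, hf, hs⟩ := List.sublistForall₂_iff.1 h1
  obtain ⟨m, hg, ht⟩ := List.sublistForall₂_iff.1 h2
  exact List.sublistForall₂_iff.2 ⟨l ++ m, List.rel_append hf hg, hs.append ht⟩

theorem hig_of_prefix {p u : List A} (h : p <+: u) : Hig p u :=
  List.sublistForall₂_iff.2 ⟨p, List.forall₂_refl p, h.sublist⟩

theorem hig_of_suffix {q u : List A} (h : q <:+ u) : Hig q u :=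
  List.sublistForall₂_iff.2 ⟨q, List.forall₂_refl q, h.sublist⟩

theorem hig_append_split {a b c : List A} (h : Hig (a ++ b) c) :
    ∃ c₁ c₂, c = c₁ ++ c₂ ∧ Hig a c₁ ∧ Hig b c₂ := by
  obtain ⟨l, hf, hs⟩ := List.sublistForall₂_iff.1 h
  have h1 : List.Forall₂ (· ≤ ·) a (l.take a.length) := by
    have := List.forall₂_take a.length hf
    rwa [List.take_left] at this
  have h2 : List.Forall₂ (· ≤ ·) b (l.drop a.length) := by
    have := List.forall₂_drop a.length hf
    rwa [List.drop_left] at this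
  rw [← List.take_append_drop a.length l] at hs
  obtain ⟨c₁, c₂, rfl, hs1, hs2⟩ := List.append_sublist_iff.1 hs
  exact ⟨c₁, c₂, rfl, List.sublistForall₂_iff.2 ⟨_, h1, hs1⟩,
    List.sublistForall₂_iff.2 ⟨_, h2, hs2⟩⟩

end HigLemmas

theorem stmt9 {A : Type*} [PartialOrder A] :
    (∀ X Y : Set (List A), IsFinal X → IsFinal Y →
      minSet (conc X Y) = conc (minSet X) (minSet Y)) ∧
    minSet (Set.univ : Set (List A)) = {([] : List A)} ∧
    (∀ X : Set (List A), IsFinal X → IsAnti (minSet X)) ∧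
    (∀ U : Set (List A), IsAnti U → ∃ X : Set (List A), IsFinal X ∧ minSet X = U) := by
  refine ⟨?_, ?_, ?_, ?_⟩
  · -- Min is multiplicative
    intro X Y hX hY
    ext w
    constructor
    · rintro ⟨hw, hmin⟩
      obtain ⟨a, ha, b, hb, rfl⟩ := hw
      refine ⟨a, ⟨ha, fun y hy hya => ?_⟩, b, ⟨hb, fun y hy hyb => ?_⟩, rfl⟩
      · have := hmin (y ++ b) ⟨y, hy, b, hb, rfl⟩ (hig_append hya (hig_refl b))
        exact List.append_cancel_right this
      · have := hmin (a ++ y) ⟨a, ha, y, hy, rfl⟩ (hig_append (hig_refl a) hyb)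
        exact List.append_cancel_left this
    · rintro ⟨u, hu, v, hv, rfl⟩
      refine ⟨⟨u, hu.1, v, hv.1, rfl⟩, ?_⟩
      rintro w ⟨w1, hw1, w2, hw2, rfl⟩ hig
      obtain ⟨c₁, c₂, heq, hp, hq⟩ := hig_append_split hig
      rcases List.append_eq_append_iff.1 heq.symm with ⟨r, hr1, hr2⟩ | ⟨r, hr1, hr2⟩
      · -- hr1 : u = c₁ ++ r, hr2 : c₂ = r ++ v
        have hw1u : w1 = u := hu.2 w1 hw1 (hig_trans hp (hig_of_prefix ⟨r, hr1.symm⟩))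
        have hlen : u.length ≤ c₁.length := hw1u ▸ hig_length hp
        have hr : r = [] := by
          have := congrArg List.length hr1
          simp at this
          exact List.length_eq_zero_iff.1 (by omega)
        subst hr
        simp at hr1 hr2
        have hw2v : w2 = v := hv.2 w2 hw2 (hr2 ▸ hq)
        rw [hw1u, hw2v]
      · -- hr1 : c₁ = u ++ r, hr2 : v = r ++ c₂
        have hw2v : w2 = v := hv.2 w2 hw2 (hig_trans hq (hig_of_suffix ⟨r, hr2.symm⟩))
        have hlen : v.length ≤ c₂.length := hw2v ▸ hig_length hq
        have hr : r = [] := by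
          have := congrArg List.length hr2
          simp at this
          exact List.length_eq_zero_iff.1 (by omega)
        subst hr
        simp at hr1 hr2
        have hw1u : w1 = u := hu.2 w1 hw1 (hr1 ▸ hp)
        rw [hw1u, hw2v]
  · -- Min of the full language is the empty word
    ext x
    simp only [minSet, Set.mem_setOf_eq, Set.mem_univ, true_and, Set.mem_singleton_iff]
    constructor
    · intro h
      exact (h [] trivial (hig_nil x)).symm
    · rintro rfl
      exact fun y _ hy => hig_nil_right hy
  · -- Min of a final segment is an antichain
    intro X _ x hx y hy hne hig
    exact hne (hy.2 x hx.1 hig)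
  · -- every antichain arises as Min of a final segment
    intro U hU
    refine ⟨upset U, fun a b hab ha => ?_, ?_⟩
    · obtain ⟨c, hc, hca⟩ := ha
      exact ⟨c, hc, hig_trans hca hab⟩
    · ext x
      constructor
      · rintro ⟨⟨a, ha, hax⟩, hmin⟩
        have : a = x := hmin a ⟨a, ha, hig_refl a⟩ hax
        exact this ▸ ha
      · intro hx
        refine ⟨⟨x, hx, hig_refl x⟩, ?_⟩
        rintro y ⟨a, ha, hay⟩ hyx
        have hax : Hig a x := hig_trans hay hyx
        have hax' : a = x := by
          by_contra hne
          exact hU a ha x hx hne hax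
        subst hax'
        exact hig_antisymm hyx hay
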